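/- arXiv:2005.00294 — 4 statements merged into one kernel-verified Lean document; each statement's English description precedes it below -/
import Mathlib

section
/- A finite set of flow constraints k is satisfiable (i.e., there exists a solution σ : Atoms → {S,T} such that every constraint of k holds after substituting σ, where Src is interpreted as T and Snk as S and the relation is the can-flow-to order S ⊑ T) if and only if there is no path in the constraint graph of k from Src to Snk. -/
/-- Nodes of the constraint graph: the transient source `Src` (T), the stable
sink `Snk` (S), and the atoms. -/
inductive Node (A : Type) where
  | Src : Node A
  | Snk : Node A
  | atom : A → Node A

/-- `l` is a path from `u` to `v` in the constraint (edge) set `k`: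
a finite nonempty sequence of nodes starting at `u`, ending at `v`, with each
consecutive pair an edge of `k`. -/
def IsPathFrom {A : Type} (k : Set (Node A × Node A)) (u v : Node A)
    (l : List (Node A)) : Prop :=
  List.Chain' (fun x y => (x, y) ∈ k) l ∧ l.head? = some u ∧ l.getLast? = some v

/-- There is a path from `u` to `v` in `k`. -/
def Reaches {A : Type} (k : Set (Node A × Node A)) (u v : Node A) : Prop :=
  ∃ l, IsPathFrom k u v l

/-- Extend a solution (atoms to the two-point lattice, `false = S ⊑ true = T`)
to all nodes, interpreting `Src` as `T` and `Snk` as `S`. -/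
def extSol {A : Type} (σ : A → Bool) : Node A → Bool
  | .Src => true
  | .Snk => false
  | .atom a => σ a

/-- `σ` satisfies every constraint (edge) `u → v` of `k`: `σ(u) ⊑ σ(v)`. -/
def Satisfies {A : Type} (k : Set (Node A × Node A)) (σ : A → Bool) : Prop :=
  ∀ e ∈ k, extSol σ e.1 ≤ extSol σ e.2

/-- The set of atoms `As` cuts the path `l`: some atom of `As` occurs on `l`. -/
def CutsList {A : Type} (As : Set A) (l : List (Node A)) : Prop :=
  ∃ a ∈ As, Node.atom a ∈ l

/-- `As` is a cut-set for `k`: it cuts every `Src`-to-`Snk` path of `k`. -/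
def IsCutSet {A : Type} (As : Set A) (k : Set (Node A × Node A)) : Prop :=
  ∀ l, IsPathFrom k Node.Src Node.Snk l → CutsList As l

/-- The edge `e` is incident to an atom of `As`. -/
def Incident {A : Type} (As : Set A) (e : Node A × Node A) : Prop :=
  (∃ a ∈ As, e.1 = Node.atom a) ∨ (∃ a ∈ As, e.2 = Node.atom a)

-- The canonical assignment: `T` iff `Src` reaches the atom in `k`.
open Classical in
noncomputable def canonSol {A : Type} (k : Set (Node A × Node A)) : A → Bool :=
  fun a => if Reaches k Node.Src (Node.atom a) then true else false

/-! A solution is monotone along every edge, hence along every path, so a path from `Src`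
to `Snk` would force `T ⊑ S`. Conversely, the assignment sending an atom to `T` exactly
when `Src` reaches it satisfies every edge `u → v`: if `u` is reached then so is `v`, and
`v` cannot be `Snk`. -/

section

variable {A : Type} {k : Set (Node A × Node A)} {u v w : Node A}

theorem reaches_iff_reflTransGen :
    Reaches k u v ↔ Relation.ReflTransGen (fun x y => (x, y) ∈ k) u v := by
  constructor
  · rintro ⟨l, hchain, hhead, hlast⟩
    have hne : l ≠ [] := by rintro rfl; simp at hhead
    rw [List.head?_eq_some_head hne, Option.some_inj] at hhead
    rw [List.getLast?_eq_some_getLast hne, Option.some_inj] at hlast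
    simpa only [hhead, hlast] using List.relationReflTransGen_of_exists_isChain l hchain hne
  · intro h
    obtain ⟨l, hne, hchain, hhead, hlast⟩ := List.exists_isChain_ne_nil_of_relationReflTransGen h
    exact ⟨l, hchain, by rw [List.head?_eq_some_head hne, hhead],
      by rw [List.getLast?_eq_some_getLast hne, hlast]⟩

theorem Reaches.refl : Reaches k u u :=
  reaches_iff_reflTransGen.mpr .refl

theorem Reaches.tail (h : Reaches k u v) (hvw : (v, w) ∈ k) : Reaches k u w :=
  reaches_iff_reflTransGen.mpr ((reaches_iff_reflTransGen.mp h).tail hvw)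

theorem Satisfies.extSol_le_of_reaches {σ : A → Bool} (hσ : Satisfies k σ)
    (h : Reaches k u v) : extSol σ u ≤ extSol σ v := by
  rw [reaches_iff_reflTransGen] at h
  induction h with
  | refl => exact le_rfl
  | tail _ hvw ih => exact ih.trans (hσ _ hvw)

theorem extSol_canonSol_eq_true_iff (hk : ¬ Reaches k Node.Src Node.Snk) :
    extSol (canonSol k) u = true ↔ Reaches k Node.Src u := by
  cases u with
  | Src => simpa [extSol] using Reaches.refl
  | Snk => simpa [extSol] using hk
  | atom a => simp [extSol, canonSol]

theorem satisfies_canonSol (hk : ¬ Reaches k Node.Src Node.Snk) : Satisfies k (canonSol k) := by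
  rintro ⟨u, v⟩ huv
  rw [Bool.le_iff_imp, extSol_canonSol_eq_true_iff hk, extSol_canonSol_eq_true_iff hk]
  exact fun hu => hu.tail huv

end

theorem satisfiable_iff_no_src_snk_path_general {A : Type}
    (k : Set (Node A × Node A)) :
    (∃ σ : A → Bool, Satisfies k σ) ↔ ¬ Reaches k Node.Src Node.Snk := by
  constructor
  · rintro ⟨σ, hσ⟩ hk
    exact not_le.mpr Bool.false_lt_true (hσ.extSol_le_of_reaches hk)
  · exact fun hk => ⟨canonSol k, satisfies_canonSol hk⟩

/-- A finite constraint set is satisfiable iff it has no `Src`-to-`Snk` path. -/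
theorem satisfiable_iff_no_src_snk_path {A : Type}
    (k : Set (Node A × Node A)) (hfin : k.Finite) :
    (∃ σ : A → Bool, Satisfies k σ) ↔ ¬ Reaches k Node.Src Node.Snk :=
  satisfiable_iff_no_src_snk_path_general k
end

section
/- If a finite set of flow constraints k contains no Src-to-Snk path, then the canonical assignment σ(k), defined by σ(k)(a) = T if there is a path from Src to a in k and σ(k)(a) = S otherwise, satisfies every constraint in k. -/
lemma reaches_refl_src {A : Type} (k : Set (Node A × Node A)) :
    Reaches k Node.Src Node.Src :=
  ⟨[Node.Src], List.isChain_singleton _, rfl, rfl⟩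

lemma reaches_step {A : Type} {k : Set (Node A × Node A)} {u v : Node A}
    (h : Reaches k Node.Src u) (he : (u, v) ∈ k) :
    Reaches k Node.Src v := by
  obtain ⟨l, hc, hh, hl⟩ := h
  refine ⟨l ++ [v], ?_, ?_, ?_⟩
  · refine List.isChain_append.mpr ⟨hc, List.isChain_singleton _, ?_⟩
    intro x hx y hy
    simp at hy
    subst hy
    rw [hl] at hx
    cases hx; exact he
  · cases l with
    | nil => simp at hh
    | cons a t => simpa using hh
  · simp

/-- If a finite constraint set `k` has no `Src`-to-`Snk` path, the canonical
reachability-based assignment `σ(k)` satisfies every constraint of `k`. -/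
theorem canonSol_satisfies {A : Type}
    (k : Set (Node A × Node A)) (hfin : k.Finite)
    (hno : ¬ Reaches k Node.Src Node.Snk) :
    Satisfies k (canonSol k) := by
  intro e he
  have key : Reaches k Node.Src e.1 → Reaches k Node.Src e.2 :=
    fun h => reaches_step h he
  have hv : ∀ w : Node A, Reaches k Node.Src w → extSol (canonSol k) w = true := by
    intro w hw
    cases w with
    | Src => rfl
    | Snk => exact absurd hw hno
    | atom a => simp [extSol, canonSol, hw]
  cases h1 : e.1 with
  | Snk => simp [extSol, h1]
  | Src =>
    have := hv e.2 (key (h1 ▸ reaches_refl_src k))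
    simp [this]
  | atom a =>
    by_cases hr : Reaches k Node.Src (Node.atom a)
    · have := hv e.2 (key (h1 ▸ hr))
      simp [this]
    · simp [extSol, h1, canonSol, hr]
end

section
/- The canonical solution of a satisfiable constraint set is least: if k has no Src-to-Snk path and σ' is any solution satisfying k, then for every atom a, σ(k)(a) ⊑ σ'(a), where σ(k)(a) = T iff Src reaches a in k. -/
lemma path_mono {A : Type} {k : Set (Node A × Node A)} {σ : A → Bool}
    (hσ : Satisfies k σ) :
    ∀ (l : List (Node A)) (u v : Node A), IsPathFrom k u v l →
      extSol σ u ≤ extSol σ v := by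
  intro l
  induction l with
  | nil => intro u v ⟨_, h, _⟩; simp [List.head?] at h
  | cons x t ih =>
    intro u v ⟨hc, hh, hl⟩
    simp [List.head?] at hh
    subst hh
    cases t with
    | nil =>
      simp [List.getLast?] at hl
      subst hl; exact le_refl _
    | cons y t' =>
      have hedge : (x, y) ∈ k := (List.isChain_cons_cons.mp hc).1
      have h1 := hσ _ hedge
      have h2 := ih y v ⟨(List.isChain_cons_cons.mp hc).2, rfl, by
        rw [← hl]; simp [List.getLast?_cons_cons]⟩
      exact le_trans h1 h2

/-- The canonical solution of a satisfiable constraint set is least: any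
solution `σ'` of `k` dominates `σ(k)` pointwise on atoms. -/
theorem canonSol_least {A : Type}
    (k : Set (Node A × Node A)) (hfin : k.Finite)
    (hno : ¬ Reaches k Node.Src Node.Snk)
    (σ' : A → Bool) (hσ' : Satisfies k σ') :
    ∀ a : A, canonSol k a ≤ σ' a := by
  intro a
  unfold canonSol
  split
  · rename_i h
    obtain ⟨l, hl⟩ := h
    have := path_mono hσ' l _ _ hl
    simpa [extSol] using this
  · simp
end

section
/- Given a cut-set A for a finite constraint set k, define the typing Γ(k,A) by Γ(k,A)(x) = T if there is a Src-to-x path in k not cut by A, and Γ(k,A)(x) = S otherwise. Then Γ(k,A), viewed as a solution (with Src ↦ T, Snk ↦ S), satisfies every constraint of k that is not incident to an atom of A. -/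
-- The typing extracted from a cut-set: `T` iff there is an uncut `Src`-to-`x`
-- path in `k`.
open Classical in
noncomputable def gammaSol {A : Type} (k : Set (Node A × Node A)) (As : Set A) :
    A → Bool :=
  fun x =>
    if ∃ l, IsPathFrom k Node.Src (Node.atom x) l ∧ ¬ CutsList As l then true
    else false

/-!
Extended to `Src` and `Snk`, `Γ(k,As)` marks exactly the nodes reachable from `Src` by an uncut
path; at `Snk` this is where the cut-set property enters. An uncut path to `u` extends along an
edge `u → v` whose head is not in `As`, so every such edge is satisfied.
-/

def ReachesUncut {A : Type} (k : Set (Node A × Node A)) (As : Set A) (u v : Node A) : Prop :=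
  ∃ l, IsPathFrom k u v l ∧ ¬ CutsList As l

section

variable {A : Type} {k : Set (Node A × Node A)} {As : Set A}

theorem isPathFrom_singleton (u : Node A) : IsPathFrom k u u [u] :=
  ⟨List.isChain_singleton u, rfl, rfl⟩

theorem IsPathFrom.snoc {u v w : Node A} {l : List (Node A)} (hl : IsPathFrom k u v l)
    (hvw : (v, w) ∈ k) : IsPathFrom k u w (l ++ [w]) := by
  obtain ⟨hchain, hhead, hlast⟩ := hl
  obtain ⟨x, xs, rfl⟩ : ∃ x xs, l = x :: xs :=
    List.exists_cons_of_ne_nil (by rintro rfl; simp at hhead)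
  refine ⟨hchain.append (List.isChain_singleton w) ?_, hhead, List.getLast?_concat ..⟩
  simp only [hlast, Option.mem_def, Option.some.injEq, List.head?_cons]
  rintro _ rfl _ rfl
  exact hvw

theorem not_cutsList_snoc {l : List (Node A)} {w : Node A} (hl : ¬ CutsList As l)
    (hw : ∀ a ∈ As, w ≠ Node.atom a) : ¬ CutsList As (l ++ [w]) := by
  rintro ⟨a, ha, hmem⟩
  rcases List.mem_append.mp hmem with hmem | hmem
  · exact hl ⟨a, ha, hmem⟩
  · exact hw a ha (List.mem_singleton.mp hmem).symm

theorem ReachesUncut.step {u v w : Node A} (h : ReachesUncut k As u v) (hvw : (v, w) ∈ k)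
    (hw : ∀ a ∈ As, w ≠ Node.atom a) : ReachesUncut k As u w :=
  let ⟨l, hl, huncut⟩ := h
  ⟨l ++ [w], hl.snoc hvw, not_cutsList_snoc huncut hw⟩

theorem ReachesUncut.refl {u : Node A} (hu : ∀ a ∈ As, u ≠ Node.atom a) :
    ReachesUncut k As u u :=
  ⟨[u], isPathFrom_singleton u, fun ⟨a, ha, hmem⟩ => hu a ha (List.mem_singleton.mp hmem).symm⟩

theorem IsCutSet.not_reachesUncut_snk (hcut : IsCutSet As k) :
    ¬ ReachesUncut k As Node.Src Node.Snk :=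
  fun ⟨l, hl, huncut⟩ => huncut (hcut l hl)

theorem gammaSol_eq_true_iff {x : A} :
    gammaSol k As x = true ↔ ReachesUncut k As Node.Src (Node.atom x) := by
  classical
  unfold gammaSol ReachesUncut
  split_ifs with h <;> simpa using h

theorem extSol_gammaSol_eq_true_iff (hcut : IsCutSet As k) {v : Node A} :
    extSol (gammaSol k As) v = true ↔ ReachesUncut k As Node.Src v := by
  cases v with
  | Src => exact iff_of_true rfl (ReachesUncut.refl fun _ _ h => nomatch h)
  | Snk => exact iff_of_false Bool.false_ne_true hcut.not_reachesUncut_snk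
  | atom x => exact gammaSol_eq_true_iff

end

theorem gammaSol_satisfies_nonIncident_general {A : Type}
    (k : Set (Node A × Node A))
    (As : Set A) (hcut : IsCutSet As k) :
    ∀ e ∈ k, ¬ Incident As e →
      extSol (gammaSol k As) e.1 ≤ extSol (gammaSol k As) e.2 := by
  rintro ⟨u, v⟩ huv hinc
  have hv : ∀ a ∈ As, v ≠ Node.atom a := fun a ha hva => hinc (Or.inr ⟨a, ha, hva⟩)
  rw [Bool.le_iff_imp, extSol_gammaSol_eq_true_iff hcut, extSol_gammaSol_eq_true_iff hcut]
  exact fun hu => hu.step huv hv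

/-- Given a cut-set `As` for the finite constraint set `k`, the typing
`Γ(k,As)` (viewed as a solution, with `Src ↦ T` and `Snk ↦ S`) satisfies every
constraint of `k` not incident to an atom of `As`. -/
theorem gammaSol_satisfies_nonIncident {A : Type}
    (k : Set (Node A × Node A)) (hfin : k.Finite)
    (As : Set A) (hcut : IsCutSet As k) :
    ∀ e ∈ k, ¬ Incident As e →
      extSol (gammaSol k As) e.1 ≤ extSol (gammaSol k As) e.2 :=
  gammaSol_satisfies_nonIncident_general k As hcut
end
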